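/- arXiv:1112.0957 — 10 statements merged into one kernel-verified Lean document; each statement's English description precedes it below -/
import Mathlib

section
/- If F is a pre-primitive of f on an interval J, where f is bounded on compact subintervals of J, then F is Lipschitz on every compact subinterval [a,b] ⊆ J, with Lipschitz constant max(|inf_{[a,b]} f|, |sup_{[a,b]} f|). -/
open Set Filter Topology

noncomputable section

/-- The set of lower Darboux sums of `f` over `[a,b]`: sums `∑ pᵢ (xᵢ₊₁ - xᵢ)` over
partitions `a = x₀ ≤ x₁ ≤ … ≤ xₙ = b` where each `pᵢ` is a lower bound of `f` on
`[xᵢ, xᵢ₊₁]`. -/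
def lowerSums (f : ℝ → ℝ) (a b : ℝ) : Set ℝ :=
  {s | ∃ n : ℕ, ∃ x : ℕ → ℝ, ∃ p : ℕ → ℝ,
    x 0 = a ∧ x n = b ∧ (∀ i < n, x i ≤ x (i + 1)) ∧
    (∀ i < n, ∀ t ∈ Set.Icc (x i) (x (i + 1)), p i ≤ f t) ∧
    s = ∑ i ∈ Finset.range n, p i * (x (i + 1) - x i)}

/-- The set of upper Darboux sums of `f` over `[a,b]`. -/
def upperSums (f : ℝ → ℝ) (a b : ℝ) : Set ℝ :=
  {s | ∃ n : ℕ, ∃ x : ℕ → ℝ, ∃ q : ℕ → ℝ,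
    x 0 = a ∧ x n = b ∧ (∀ i < n, x i ≤ x (i + 1)) ∧
    (∀ i < n, ∀ t ∈ Set.Icc (x i) (x (i + 1)), f t ≤ q i) ∧
    s = ∑ i ∈ Finset.range n, q i * (x (i + 1) - x i)}

/-- The lower Darboux integral of `f` over `[a,b]`. -/
def lowerDarboux (f : ℝ → ℝ) (a b : ℝ) : ℝ := sSup (lowerSums f a b)

/-- The upper Darboux integral of `f` over `[a,b]`. -/
def upperDarboux (f : ℝ → ℝ) (a b : ℝ) : ℝ := sInf (upperSums f a b)

/-- `f` is bounded on every compact subinterval of `J`. -/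
def BoundedOnCompacts (J : Set ℝ) (f : ℝ → ℝ) : Prop :=
  ∀ a ∈ J, ∀ b ∈ J, ∃ p q : ℝ, ∀ t ∈ Set.Icc a b, p ≤ f t ∧ f t ≤ q

/-- `F` is a pre-primitive of `f` on `J`: every difference quotient lies between
every lower bound and every upper bound of `f` on the interval with the given
endpoints. -/
def PrePrimitive (J : Set ℝ) (f F : ℝ → ℝ) : Prop :=
  ∀ x ∈ J, ∀ y ∈ J, x ≠ y → ∀ p q : ℝ,
    (∀ t ∈ Set.uIcc x y, p ≤ f t ∧ f t ≤ q) →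
    p ≤ (F y - F x) / (y - x) ∧ (F y - F x) / (y - x) ≤ q

/-- `f` is Darboux (Riemann) integrable on every compact subinterval of `J`. -/
def DarbouxIntegrableOnCompacts (J : Set ℝ) (f : ℝ → ℝ) : Prop :=
  ∀ a ∈ J, ∀ b ∈ J, a < b → lowerDarboux f a b = upperDarboux f a b

theorem stmt1 (J : Set ℝ) (hJ : J.OrdConnected) (f F : ℝ → ℝ)
    (hbd : BoundedOnCompacts J f) (hF : PrePrimitive J f F)
    (a b : ℝ) (ha : a ∈ J) (hb : b ∈ J) (hab : a ≤ b) :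
    LipschitzOnWith
      (Real.toNNReal (max |sInf (f '' Set.Icc a b)| |sSup (f '' Set.Icc a b)|))
      F (Set.Icc a b) := by
  set p := sInf (f '' Set.Icc a b) with hp
  set q := sSup (f '' Set.Icc a b) with hq
  have hIccJ : Set.Icc a b ⊆ J := hJ.out ha hb
  obtain ⟨p0, q0, hpq0⟩ := hbd a ha b hb
  have hne : (f '' Set.Icc a b).Nonempty := ⟨f a, ⟨a, ⟨le_refl a, hab⟩, rfl⟩⟩
  have hbdd : BddBelow (f '' Set.Icc a b) := ⟨p0, fun y ⟨t, ht, hy⟩ => hy ▸ (hpq0 t ht).1⟩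
  have hbda : BddAbove (f '' Set.Icc a b) := ⟨q0, fun y ⟨t, ht, hy⟩ => hy ▸ (hpq0 t ht).2⟩
  rw [lipschitzOnWith_iff_dist_le_mul]
  intro x hx y hy
  rcases eq_or_ne y x with rfl | hxy
  · simp
  have hq1 : ∀ t ∈ Set.uIcc y x, p ≤ f t ∧ f t ≤ q := by
    intro t ht
    have htab : t ∈ Set.Icc a b := by
      rcases hx with ⟨hx1, hx2⟩; rcases hy with ⟨hy1, hy2⟩
      rcases Set.mem_uIcc.1 ht with ⟨h1, h2⟩ | ⟨h1, h2⟩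
      · exact ⟨le_trans hy1 h1, le_trans h2 hx2⟩
      · exact ⟨le_trans hx1 h1, le_trans h2 hy2⟩
    exact ⟨csInf_le hbdd ⟨t, htab, rfl⟩, le_csSup hbda ⟨t, htab, rfl⟩⟩
  obtain ⟨h1, h2⟩ := hF y (hIccJ hy) x (hIccJ hx) hxy p q hq1
  have habs : |(F x - F y) / (x - y)| ≤ max |p| |q| := by
    rw [abs_le]
    constructor
    · calc -(max |p| |q|) ≤ -|p| := neg_le_neg (le_max_left _ _)
        _ ≤ p := neg_abs_le p
        _ ≤ _ := h1
    · exact h2.trans ((le_abs_self q).trans (le_max_right _ _))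
  have hcoe : (Real.toNNReal (max |p| |q|) : ℝ) = max |p| |q| :=
    Real.coe_toNNReal _ (le_trans (abs_nonneg p) (le_max_left _ _))
  rw [Real.dist_eq, Real.dist_eq, hcoe]
  have hne2 : x - y ≠ 0 := sub_ne_zero.2 (Ne.symm hxy)
  calc |F x - F y| = |(F x - F y) / (x - y)| * |x - y| := by
        rw [abs_div, div_mul_cancel₀ _ (abs_ne_zero.2 hne2)]
    _ ≤ max |p| |q| * |x - y| :=
        mul_le_mul_of_nonneg_right habs (abs_nonneg _)
end
end

section
/- If F is a pre-primitive of f on an interval J and f is bounded on compact subintervals, then F is continuous on J. -/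
open Set Filter Topology

noncomputable section

lemma aux_above (J : Set ℝ) (c : ℝ) (hc : c ∈ J) :
    ∃ b ∈ J, c ≤ b ∧ ∀ᶠ y in 𝓝[J] c, y ≤ b := by
  by_cases h : ∃ y ∈ J, c < y
  · obtain ⟨b, hb, hcb⟩ := h
    refine ⟨b, hb, hcb.le, ?_⟩
    have : ∀ᶠ y in 𝓝 c, y ≤ b := Filter.eventually_of_mem (Iio_mem_nhds hcb) fun y hy => le_of_lt hy
    exact this.filter_mono nhdsWithin_le_nhds
  · push_neg at h
    exact ⟨c, hc, le_refl c, eventually_mem_nhdsWithin.mono fun y hy => h y hy⟩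

lemma aux_below (J : Set ℝ) (c : ℝ) (hc : c ∈ J) :
    ∃ a ∈ J, a ≤ c ∧ ∀ᶠ y in 𝓝[J] c, a ≤ y := by
  by_cases h : ∃ y ∈ J, y < c
  · obtain ⟨a, ha, hac⟩ := h
    refine ⟨a, ha, hac.le, ?_⟩
    have : ∀ᶠ y in 𝓝 c, a ≤ y := Filter.eventually_of_mem (Ioi_mem_nhds hac) fun y hy => le_of_lt hy
    exact this.filter_mono nhdsWithin_le_nhds
  · push_neg at h
    exact ⟨c, hc, le_refl c, eventually_mem_nhdsWithin.mono fun y hy => h y hy⟩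

theorem stmt2 (J : Set ℝ) (hJ : J.OrdConnected) (f F : ℝ → ℝ)
    (hbd : BoundedOnCompacts J f) (hF : PrePrimitive J f F) :
    ContinuousOn F J := by
  intro c hc
  obtain ⟨b, hbJ, hcb, hevb⟩ := aux_above J c hc
  obtain ⟨a, haJ, hac, heva⟩ := aux_below J c hc
  obtain ⟨p, q, hpq⟩ := hbd a haJ b hbJ
  set M := max |p| |q| with hM
  have key : ∀ y ∈ J, a ≤ y → y ≤ b → |F y - F c| ≤ M * |y - c| := by
    intro y hy hay hyb
    rcases eq_or_ne y c with rfl | hne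
    · simp
    · have huIcc : Set.uIcc c y ⊆ Set.Icc a b :=
        Set.uIcc_subset_Icc ⟨hac, hcb⟩ ⟨hay, hyb⟩
      have h2 := hF c hc y hy hne.symm p q (fun t ht => hpq t (huIcc ht))
      have habs : |(F y - F c) / (y - c)| ≤ M := abs_le_max_abs_abs h2.1 h2.2
      have hyc : y - c ≠ 0 := sub_ne_zero.mpr hne
      calc |F y - F c| = |(F y - F c) / (y - c)| * |y - c| := by
            rw [abs_div]
            field_simp
        _ ≤ M * |y - c| := mul_le_mul_of_nonneg_right habs (abs_nonneg _)
  have hev : ∀ᶠ y in 𝓝[J] c, |F y - F c| ≤ M * |y - c| := by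
    filter_upwards [hevb, heva, eventually_mem_nhdsWithin] with y h1 h2 h3
    exact key y h3 h2 h1
  have hg : Tendsto (fun y => M * |y - c|) (𝓝[J] c) (𝓝 0) := by
    have : Tendsto (fun y : ℝ => M * |y - c|) (𝓝 c) (𝓝 (M * |c - c|)) :=
      (tendsto_const_nhds.mul ((continuous_abs.comp (continuous_id.sub continuous_const)).tendsto c))
    simpa using this.mono_left nhdsWithin_le_nhds
  have habs0 : Tendsto (fun y => |F y - F c|) (𝓝[J] c) (𝓝 0) :=
    squeeze_zero' (Filter.Eventually.of_forall fun y => abs_nonneg _) hev hg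
  rw [ContinuousWithinAt, tendsto_iff_dist_tendsto_zero]
  simpa [Real.dist_eq] using habs0
end
end

section
/- If F is a pre-primitive of f on an interval J and f has a right-hand limit L at an interior-from-the-right point x ∈ J (i.e., f(y) → L as y → x⁺), then F has a right derivative at x equal to L. -/
open Set Filter Topology

noncomputable section

theorem stmt3 (J : Set ℝ) (hJ : J.OrdConnected) (f F : ℝ → ℝ)
    (hbd : BoundedOnCompacts J f) (hF : PrePrimitive J f F)
    (x : ℝ) (hx : x ∈ J) (hx' : ∃ b ∈ J, x < b)
    (L : ℝ) (hlim : Tendsto f (𝓝[>] x) (𝓝 L)) :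
    HasDerivWithinAt F L (Set.Ioi x) x := by
  obtain ⟨b, hb, hxb⟩ := hx'
  obtain ⟨p, q, hpq⟩ := hbd x hx b hb
  have hsubJ : Icc x b ⊆ J := hJ.out hx hb
  -- right continuity of F at x
  have key : ∀ m ∈ Ioc x b,
      F x + p * (m - x) ≤ F m ∧ F m ≤ F x + q * (m - x) := by
    intro m hm
    have hmJ : m ∈ J := hsubJ ⟨hm.1.le, hm.2⟩
    have hpos : (0:ℝ) < m - x := by linarith [hm.1]
    have hb' : ∀ t ∈ Set.uIcc x m, p ≤ f t ∧ f t ≤ q := by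
      intro t ht
      rw [Set.uIcc_of_le hm.1.le] at ht
      exact hpq t ⟨ht.1, ht.2.trans hm.2⟩
    obtain ⟨h1, h2⟩ := hF x hx m hmJ (ne_of_lt hm.1) p q hb'
    constructor
    · nlinarith [(le_div_iff₀ hpos).1 h1]
    · nlinarith [(div_le_iff₀ hpos).1 h2]
  have hFcont : Tendsto F (𝓝[>] x) (𝓝 (F x)) := by
    have h1 : Tendsto (fun m : ℝ => F x + p * (m - x)) (𝓝[>] x) (𝓝 (F x)) := by
      have : Tendsto (fun m : ℝ => F x + p * (m - x)) (𝓝 x) (𝓝 (F x + p * (x - x))) :=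
        ((tendsto_id.sub_const x).const_mul p).const_add (F x)
      simpa using this.mono_left nhdsWithin_le_nhds
    have h2 : Tendsto (fun m : ℝ => F x + q * (m - x)) (𝓝[>] x) (𝓝 (F x)) := by
      have : Tendsto (fun m : ℝ => F x + q * (m - x)) (𝓝 x) (𝓝 (F x + q * (x - x))) :=
        ((tendsto_id.sub_const x).const_mul q).const_add (F x)
      simpa using this.mono_left nhdsWithin_le_nhds
    refine tendsto_of_tendsto_of_tendsto_of_le_of_le' h1 h2 ?_ ?_ <;>
      · filter_upwards [Ioc_mem_nhdsGT_of_mem ⟨le_rfl, hxb⟩] with m hm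
        first
        | exact (key m hm).1
        | exact (key m hm).2
  rw [hasDerivWithinAt_iff_tendsto_slope,
    Set.diff_singleton_eq_self (by simp : x ∉ Ioi x)]
  rw [Metric.tendsto_nhdsWithin_nhds] at hlim ⊢
  intro ε hε
  obtain ⟨δ₀, hδ₀, hδ⟩ := hlim (ε/2) (by positivity)
  refine ⟨min δ₀ (b - x), by simp [hδ₀]; linarith, ?_⟩
  intro y hy hyd
  have hxy : x < y := hy
  have h' : y - x < min δ₀ (b - x) := by
    rw [Real.dist_eq, abs_of_pos (by linarith : (0:ℝ) < y - x)] at hyd; exact hyd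
  have hyb : y ≤ b := by linarith [lt_of_lt_of_le h' (min_le_right δ₀ (b - x))]
  have hyd0 : y - x < δ₀ := lt_of_lt_of_le h' (min_le_left δ₀ (b - x))
  have hyJ : y ∈ J := hsubJ ⟨hxy.le, hyb⟩
  -- slope over [m, y] lies in [L - ε/2, L + ε/2] for m ∈ Ioo x y
  have hslope : ∀ m ∈ Ioo x y,
      L - ε/2 ≤ (F y - F m) / (y - m) ∧ (F y - F m) / (y - m) ≤ L + ε/2 := by
    intro m hm
    have hmJ : m ∈ J := hsubJ ⟨hm.1.le, hm.2.le.trans hyb⟩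
    refine hF m hmJ y hyJ (ne_of_lt hm.2) _ _ ?_
    intro t ht
    rw [Set.uIcc_of_le hm.2.le] at ht
    have htx : x < t := lt_of_lt_of_le hm.1 ht.1
    have htd : dist t x < δ₀ := by
      rw [Real.dist_eq, abs_of_pos (by linarith)]
      linarith [ht.2]
    have := hδ htx htd
    rw [Real.dist_eq] at this
    constructor <;> [linarith [abs_lt.1 this |>.1]; linarith [abs_lt.1 this |>.2]]
  have hg : Tendsto (fun m => (F y - F m) / (y - m)) (𝓝[>] x)
      (𝓝 ((F y - F x) / (y - x))) := by
    refine Tendsto.div (tendsto_const_nhds.sub hFcont) ?_ (by intro h; linarith [sub_eq_zero.1 h])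
    exact (tendsto_const_nhds.sub (tendsto_id.mono_left nhdsWithin_le_nhds))
  have hmem : Ioo x y ∈ 𝓝[>] x := Ioo_mem_nhdsGT_of_mem ⟨le_rfl, hxy⟩
  have hle : L - ε/2 ≤ (F y - F x) / (y - x) :=
    ge_of_tendsto hg (by filter_upwards [hmem] with m hm using (hslope m hm).1)
  have hge : (F y - F x) / (y - x) ≤ L + ε/2 :=
    le_of_tendsto hg (by filter_upwards [hmem] with m hm using (hslope m hm).2)
  have : dist (slope F x y) L ≤ ε/2 := by
    rw [slope_def_field, Real.dist_eq, abs_le]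
    exact ⟨by linarith, by linarith⟩
  linarith
end
end

section
/- If F is a pre-primitive of f on an interval J and f is continuous at x ∈ J, then F is differentiable at x with F'(x) = f(x). In particular, if f is continuous on J, then every pre-primitive of f is a primitive (antiderivative) of f on J. -/
open Set Filter Topology

noncomputable section

theorem stmt4 (J : Set ℝ) (hJ : J.OrdConnected) (f F : ℝ → ℝ)
    (hbd : BoundedOnCompacts J f) (hF : PrePrimitive J f F) :
    ∀ x ∈ J, ContinuousWithinAt f J x → HasDerivWithinAt F (f x) J x := by
  intro x hx hf
  rw [hasDerivWithinAt_iff_tendsto_slope, Metric.tendsto_nhdsWithin_nhds]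
  rw [Metric.continuousWithinAt_iff] at hf
  intro ε hε
  obtain ⟨δ, hδ, hfd⟩ := hf (ε / 2) (by positivity)
  refine ⟨δ, hδ, ?_⟩
  rintro y ⟨hyJ, hyx⟩ hyd
  have hxy : x ≠ y := fun h => hyx (by simp [h.symm])
  have hsub : Set.uIcc x y ⊆ J := hJ.uIcc_subset hx hyJ
  rw [Real.dist_eq] at hyd
  have hbounds : ∀ t ∈ Set.uIcc x y, f x - ε / 2 ≤ f t ∧ f t ≤ f x + ε / 2 := by
    intro t ht
    have htJ := hsub ht
    have h1 : |t - x| ≤ |y - x| := by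
      rcases le_total x y with h | h
      · rw [Set.uIcc_of_le h] at ht
        rw [abs_of_nonneg (by linarith [ht.1]), abs_of_nonneg (by linarith)]
        linarith [ht.2]
      · rw [Set.uIcc_of_ge h] at ht
        rw [abs_of_nonpos (by linarith [ht.2]), abs_of_nonpos (by linarith)]
        linarith [ht.1]
    have := hfd htJ (by rw [Real.dist_eq]; exact lt_of_le_of_lt h1 hyd)
    rw [Real.dist_eq, abs_sub_lt_iff] at this
    constructor <;> linarith [this.1, this.2]
  have h := hF x hx y hyJ hxy _ _ hbounds
  have hs : slope F x y = (F y - F x) / (y - x) := by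
    rw [slope_def_field]
  rw [Real.dist_eq, hs, abs_sub_lt_iff]
  constructor <;> linarith [h.1, h.2]
end
end

section
/- Every function f : J → ℝ that is bounded on compact subintervals of an interval J admits a pre-primitive on J. Concretely, fixing c ∈ J, the function F_c defined by F_c(x) = lower Darboux integral of f over [c,x] for x > c, F_c(c) = 0, and F_c(x) = minus the lower Darboux integral of f over [x,c] for x < c, is a pre-primitive of f on J. -/
open Set Filter Topology

noncomputable section

lemma x_mono {x : ℕ → ℝ} {n : ℕ} (h : ∀ i < n, x i ≤ x (i + 1)) :
    ∀ j ≤ n, ∀ i ≤ j, x i ≤ x j := by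
  intro j hj
  induction j with
  | zero => intro i hi; simp [Nat.le_zero.mp hi]
  | succ k ih =>
    intro i hi
    rcases Nat.eq_or_lt_of_le hi with rfl | hlt
    · exact le_rfl
    · exact (ih (by omega) i (by omega)).trans (h k (by omega))

lemma lowerSums_le {f : ℝ → ℝ} {a b q : ℝ} (hq : ∀ t ∈ Set.Icc a b, f t ≤ q)
    {s : ℝ} (hs : s ∈ lowerSums f a b) : s ≤ q * (b - a) := by
  obtain ⟨n, x, p, h0, hn, hm, hp, rfl⟩ := hs
  have hx : ∀ i ≤ n, x i ∈ Set.Icc a b := fun i hi =>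
    ⟨h0 ▸ x_mono hm i hi 0 (Nat.zero_le _), hn ▸ x_mono hm n le_rfl i hi⟩
  calc ∑ i ∈ Finset.range n, p i * (x (i + 1) - x i)
      ≤ ∑ i ∈ Finset.range n, (q * x (i + 1) - q * x i) := by
        refine Finset.sum_le_sum fun i hi => ?_
        rw [Finset.mem_range] at hi
        rw [← mul_sub]
        have h1 : p i ≤ f (x i) := hp i hi (x i) ⟨le_rfl, hm i hi⟩
        have h2 : f (x i) ≤ q := hq (x i) (hx i hi.le)
        exact mul_le_mul_of_nonneg_right (h1.trans h2) (by linarith [hm i hi])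
    _ = q * x n - q * x 0 := Finset.sum_range_sub (fun i => q * x i) n
    _ = q * (b - a) := by rw [h0, hn, mul_sub]

lemma trivial_mem_lowerSums {f : ℝ → ℝ} {a b p : ℝ} (hab : a ≤ b)
    (hp : ∀ t ∈ Set.Icc a b, p ≤ f t) : p * (b - a) ∈ lowerSums f a b := by
  refine ⟨1, fun i => if i = 0 then a else b, fun _ => p, by simp, by simp, ?_, ?_, by simp⟩
  · intro i hi
    interval_cases i
    simpa using hab
  · intro i hi t ht
    interval_cases i
    exact hp t (by simpa using ht)

lemma add_mem_lowerSums {f : ℝ → ℝ} {a b c s1 s2 : ℝ}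
    (h1 : s1 ∈ lowerSums f a b) (h2 : s2 ∈ lowerSums f b c) :
    s1 + s2 ∈ lowerSums f a c := by
  obtain ⟨n1, x1, p1, h10, h1n, hm1, hp1, rfl⟩ := h1
  obtain ⟨n2, x2, p2, h20, h2n, hm2, hp2, rfl⟩ := h2
  have key : ∀ i, n1 ≤ i → (if i ≤ n1 then x1 i else x2 (i - n1)) = x2 (i - n1) := by
    intro i hi
    by_cases hh : i ≤ n1
    · have : i = n1 := by omega
      subst this
      simp [h1n, ← h20]
    · simp [hh]
  refine ⟨n1 + n2, fun i => if i ≤ n1 then x1 i else x2 (i - n1),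
    fun i => if i < n1 then p1 i else p2 (i - n1), by simp [h10], ?_, ?_, ?_, ?_⟩
  · beta_reduce
    rw [key (n1 + n2) (by omega), show n1 + n2 - n1 = n2 by omega]
    exact h2n
  · intro i hi
    beta_reduce
    rcases lt_trichotomy (i + 1) (n1 + 1) with h | h | h
    · have e1 : i ≤ n1 := by omega
      have e2 : i + 1 ≤ n1 := by omega
      simp only [e1, e2, if_true, if_pos]
      exact hm1 i (by omega)
    · have e0 : i = n1 := by omega
      have e1 : i ≤ n1 := by omega
      have e2 : ¬ (i + 1 ≤ n1) := by omega
      rw [if_pos e1, if_neg e2, e0, show n1 + 1 - n1 = 1 by omega, h1n, ← h20]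
      exact x_mono hm2 1 (by omega) 0 (by omega)
    · have e1 : ¬ (i ≤ n1) := by omega
      have e2 : ¬ (i + 1 ≤ n1) := by omega
      rw [if_neg e1, if_neg e2, show i + 1 - n1 = (i - n1) + 1 by omega]
      exact hm2 (i - n1) (by omega)
  · intro i hi t ht
    beta_reduce
    beta_reduce at ht
    rcases lt_or_ge i n1 with h | h
    · have e1 : i ≤ n1 := by omega
      have e2 : i + 1 ≤ n1 := by omega
      rw [if_pos e1, if_pos e2] at ht
      rw [if_pos h]
      exact hp1 i h t ht
    · have e2 : ¬ (i + 1 ≤ n1) := by omega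
      rw [key i h, if_neg e2, show i + 1 - n1 = (i - n1) + 1 by omega] at ht
      rw [if_neg (by omega : ¬ (i < n1))]
      exact hp2 (i - n1) (by omega) t ht
  · beta_reduce
    rw [Finset.sum_range_add]
    congr 1
    · refine Finset.sum_congr rfl fun i hi => ?_
      rw [Finset.mem_range] at hi
      beta_reduce
      rw [if_pos hi, if_pos (by omega : i ≤ n1), if_pos (by omega : i + 1 ≤ n1)]
    · refine Finset.sum_congr rfl fun i hi => ?_
      rw [Finset.mem_range] at hi
      beta_reduce
      rw [if_neg (by omega : ¬ (n1 + i < n1)), key (n1 + i) (by omega),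
        if_neg (by omega : ¬ (n1 + i + 1 ≤ n1)),
        show n1 + i - n1 = i by omega, show n1 + i + 1 - n1 = i + 1 by omega]

lemma split_lowerSums {f : ℝ → ℝ} {a b c s : ℝ} (hab : a ≤ b) (hbc : b ≤ c)
    (hs : s ∈ lowerSums f a c) :
    ∃ s1 ∈ lowerSums f a b, ∃ s2 ∈ lowerSums f b c, s = s1 + s2 := by
  obtain ⟨n, x, p, h0, hn, hm, hp, rfl⟩ := hs
  rcases Nat.eq_zero_or_pos n with rfl | hn0
  · have hac : a = c := by rw [← h0, hn]
    have hba : b = a := le_antisymm (hac ▸ hbc) hab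
    exact ⟨0, ⟨0, fun _ => a, p, rfl, hba.symm ▸ rfl, by omega, by omega, by simp⟩,
      0, ⟨0, fun _ => b, p, rfl, by rw [hba, hac], by omega, by omega, by simp⟩, by simp⟩
  · have hex : ∃ i, i < n ∧ b ≤ x (i + 1) :=
      ⟨n - 1, by omega, by rw [show n - 1 + 1 = n by omega, hn]; exact hbc⟩
    set k := Nat.find hex with hkdef
    obtain ⟨hkn, hbk⟩ : k < n ∧ b ≤ x (k + 1) := Nat.find_spec hex
    have hxk : x k ≤ b := by
      rcases Nat.eq_zero_or_pos k with h | h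
      · rw [h, h0]; exact hab
      · have hmin := Nat.find_min hex (show k - 1 < k by omega)
        push_neg at hmin
        have := hmin (by omega)
        rw [show k - 1 + 1 = k by omega] at this
        exact this.le
    refine ⟨∑ i ∈ Finset.range (k + 1), p i *
        ((if i + 1 ≤ k then x (i + 1) else b) - (if i ≤ k then x i else b)),
      ⟨k + 1, fun i => if i ≤ k then x i else b, p, by simp [h0], by simp, ?_, ?_, rfl⟩,
      ∑ i ∈ Finset.range (n - k), p (i + k) *
        ((if i + 1 = 0 then b else x (i + 1 + k)) - (if i = 0 then b else x (i + k))),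
      ⟨n - k, fun i => if i = 0 then b else x (i + k), fun i => p (i + k),
        by simp, ?_, ?_, ?_, rfl⟩, ?_⟩
    · intro i hi
      beta_reduce
      by_cases h : i + 1 ≤ k
      · rw [if_pos h, if_pos (by omega : i ≤ k)]
        exact hm i (by omega)
      · have : i = k := by omega
        rw [if_neg h, if_pos (by omega : i ≤ k), this]
        exact hxk
    · intro i hi t ht
      beta_reduce
      beta_reduce at ht
      have e1 : i ≤ k := by omega
      rw [if_pos e1] at ht
      have hsub : (if i + 1 ≤ k then x (i + 1) else b) ≤ x (i + 1) := by
        by_cases h : i + 1 ≤ k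
        · rw [if_pos h]
        · rw [if_neg h]
          have : i = k := by omega
          rw [this]; exact hbk
      exact hp i (by omega) t ⟨ht.1, ht.2.trans hsub⟩
    · beta_reduce
      rw [if_neg (by omega : ¬ (n - k = 0)), show n - k + k = n by omega]
      exact hn
    · intro i hi
      beta_reduce
      by_cases h : i = 0
      · subst h
        simpa [show (0:ℕ) + 1 + k = k + 1 by omega] using hbk
      · rw [if_neg h, if_neg (by omega : ¬ (i + 1 = 0)),
          show i + 1 + k = (i + k) + 1 by omega]
        exact hm (i + k) (by omega)
    · intro i hi t ht
      beta_reduce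
      beta_reduce at ht
      rw [if_neg (by omega : ¬ (i + 1 = 0)),
        show i + 1 + k = (i + k) + 1 by omega] at ht
      have hsub : x (i + k) ≤ (if i = 0 then b else x (i + k)) := by
        by_cases h : i = 0
        · rw [if_pos h, h]
          simpa using hxk
        · rw [if_neg h]
      exact hp (i + k) (by omega) t ⟨hsub.trans ht.1, ht.2⟩
    · -- sum equality
      have e1 : ∑ i ∈ Finset.range (k + 1), p i *
          ((if i + 1 ≤ k then x (i + 1) else b) - (if i ≤ k then x i else b))
          = (∑ i ∈ Finset.range k, p i * (x (i + 1) - x i)) + p k * (b - x k) := by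
        rw [Finset.sum_range_succ, if_neg (by omega : ¬ (k + 1 ≤ k)), if_pos le_rfl]
        congr 1
        refine Finset.sum_congr rfl fun i hi => ?_
        rw [Finset.mem_range] at hi
        rw [if_pos (by omega : i + 1 ≤ k), if_pos (by omega : i ≤ k)]
      have e2 : ∑ i ∈ Finset.range (n - k), p (i + k) *
          ((if i + 1 = 0 then b else x (i + 1 + k)) - (if i = 0 then b else x (i + k)))
          = p k * (x (k + 1) - b) + ∑ i ∈ Finset.range (n - (k + 1)),
            p (i + (k + 1)) * (x (i + 1 + (k + 1)) - x (i + (k + 1))) := by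
        rw [show n - k = 1 + (n - (k + 1)) by omega, Finset.sum_range_add]
        congr 1
        · simp [show (0:ℕ) + 1 + k = k + 1 by omega]
        · refine Finset.sum_congr rfl fun i hi => ?_
          rw [Finset.mem_range] at hi
          rw [if_neg (by omega : ¬ (1 + i + 1 = 0)), if_neg (by omega : ¬ (1 + i = 0))]
          ring_nf
      have e0 : ∑ i ∈ Finset.range n, p i * (x (i + 1) - x i)
          = (∑ i ∈ Finset.range (k + 1), p i * (x (i + 1) - x i))
            + ∑ i ∈ Finset.range (n - (k + 1)),
              p (k + 1 + i) * (x (k + 1 + i + 1) - x (k + 1 + i)) := by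
        rw [← Finset.sum_range_add, show k + 1 + (n - (k + 1)) = n by omega]
      have e3 : ∑ i ∈ Finset.range (n - (k + 1)),
            p (i + (k + 1)) * (x (i + 1 + (k + 1)) - x (i + (k + 1)))
          = ∑ i ∈ Finset.range (n - (k + 1)),
            p (k + 1 + i) * (x (k + 1 + i + 1) - x (k + 1 + i)) :=
        Finset.sum_congr rfl fun i _ => by
          rw [show i + (k + 1) = k + 1 + i by omega, show i + 1 + (k + 1) = k + 1 + i + 1 by omega]
      rw [e1, e2, e3, e0, Finset.sum_range_succ]
      ring

lemma lD_ge {f : ℝ → ℝ} {a b p q : ℝ} (hab : a ≤ b)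
    (hpq : ∀ t ∈ Set.Icc a b, p ≤ f t ∧ f t ≤ q) :
    p * (b - a) ≤ lowerDarboux f a b :=
  le_csSup ⟨q * (b - a), fun _ hs => lowerSums_le (fun t ht => (hpq t ht).2) hs⟩
    (trivial_mem_lowerSums hab fun t ht => (hpq t ht).1)

lemma lD_le {f : ℝ → ℝ} {a b p q : ℝ} (hab : a ≤ b)
    (hpq : ∀ t ∈ Set.Icc a b, p ≤ f t ∧ f t ≤ q) :
    lowerDarboux f a b ≤ q * (b - a) :=
  csSup_le ⟨_, trivial_mem_lowerSums hab fun t ht => (hpq t ht).1⟩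
    fun _ hs => lowerSums_le (fun t ht => (hpq t ht).2) hs

lemma lD_add {f : ℝ → ℝ} {a b c p q : ℝ} (hab : a ≤ b) (hbc : b ≤ c)
    (hpq : ∀ t ∈ Set.Icc a c, p ≤ f t ∧ f t ≤ q) :
    lowerDarboux f a c = lowerDarboux f a b + lowerDarboux f b c := by
  have hIab : Set.Icc a b ⊆ Set.Icc a c := Set.Icc_subset_Icc le_rfl hbc
  have hIbc : Set.Icc b c ⊆ Set.Icc a c := Set.Icc_subset_Icc hab le_rfl
  have hab' := fun t ht => hpq t (hIab ht)
  have hbc' := fun t ht => hpq t (hIbc ht)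
  have hne1 : (lowerSums f a b).Nonempty := ⟨_, trivial_mem_lowerSums hab fun t ht => (hab' t ht).1⟩
  have hne2 : (lowerSums f b c).Nonempty := ⟨_, trivial_mem_lowerSums hbc fun t ht => (hbc' t ht).1⟩
  have hne : (lowerSums f a c).Nonempty :=
    ⟨_, trivial_mem_lowerSums (hab.trans hbc) fun t ht => (hpq t ht).1⟩
  have hbdd : BddAbove (lowerSums f a c) :=
    ⟨q * (c - a), fun _ hs => lowerSums_le (fun t ht => (hpq t ht).2) hs⟩
  apply le_antisymm
  · refine csSup_le hne fun s hs => ?_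
    obtain ⟨s1, hs1, s2, hs2, rfl⟩ := split_lowerSums hab hbc hs
    exact add_le_add
      (le_csSup ⟨q * (b - a), fun _ h => lowerSums_le (fun t ht => (hab' t ht).2) h⟩ hs1)
      (le_csSup ⟨q * (c - b), fun _ h => lowerSums_le (fun t ht => (hbc' t ht).2) h⟩ hs2)
  · simp only [lowerDarboux] at *
    have h1 : ∀ s1 ∈ lowerSums f a b, s1 + sSup (lowerSums f b c) ≤ sSup (lowerSums f a c) := by
      intro s1 hs1
      have h2 : ∀ s2 ∈ lowerSums f b c, s2 ≤ sSup (lowerSums f a c) - s1 := fun s2 hs2 => by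
        have := le_csSup hbdd (add_mem_lowerSums hs1 hs2)
        linarith
      have := csSup_le hne2 h2
      linarith
    have h3 : ∀ s1 ∈ lowerSums f a b, s1 ≤ sSup (lowerSums f a c) - sSup (lowerSums f b c) :=
      fun s1 hs1 => by linarith [h1 s1 hs1]
    have := csSup_le hne1 h3
    linarith

lemma F_diff {J : Set ℝ} {f : ℝ → ℝ} (hbd : BoundedOnCompacts J f) {c : ℝ} (hc : c ∈ J)
    {x y : ℝ} (hx : x ∈ J) (hy : y ∈ J) (hxy : x < y) :
    (if c < y then lowerDarboux f c y else if y = c then 0 else -(lowerDarboux f y c)) -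
      (if c < x then lowerDarboux f c x else if x = c then 0 else -(lowerDarboux f x c))
      = lowerDarboux f x y := by
  rcases lt_trichotomy c x with h1 | rfl | h1
  · rw [if_pos (h1.trans hxy), if_pos h1]
    obtain ⟨p, q, hpq⟩ := hbd c hc y hy
    rw [lD_add h1.le hxy.le hpq]
    ring
  · rw [if_pos hxy, if_neg (lt_irrefl c), if_pos rfl]
    ring
  · rcases lt_trichotomy c y with h2 | rfl | h2
    · rw [if_pos h2, if_neg (not_lt.mpr h1.le), if_neg (ne_of_lt h1)]
      obtain ⟨p, q, hpq⟩ := hbd x hx y hy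
      rw [lD_add h1.le h2.le hpq]
      ring
    · rw [if_neg (lt_irrefl c), if_pos rfl, if_neg (not_lt.mpr h1.le), if_neg (ne_of_lt h1)]
      ring
    · rw [if_neg (not_lt.mpr h2.le), if_neg (ne_of_lt h2), if_neg (not_lt.mpr h1.le),
        if_neg (ne_of_lt h1)]
      obtain ⟨p, q, hpq⟩ := hbd x hx c hc
      rw [lD_add hxy.le h2.le hpq]
      ring

theorem stmt5 (J : Set ℝ) (hJ : J.OrdConnected) (f : ℝ → ℝ)
    (hbd : BoundedOnCompacts J f) (c : ℝ) (hc : c ∈ J) :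
    PrePrimitive J f
      (fun x => if c < x then lowerDarboux f c x
        else if x = c then 0 else -(lowerDarboux f x c)) := by
  intro x hx y hy hne p q hpq
  beta_reduce
  rcases hne.lt_or_gt with hxy | hyx
  · rw [Set.uIcc_of_le hxy.le] at hpq
    rw [F_diff hbd hc hx hy hxy]
    constructor
    · rw [le_div_iff₀ (by linarith)]
      exact lD_ge hxy.le hpq
    · rw [div_le_iff₀ (by linarith)]
      exact lD_le hxy.le hpq
  · rw [Set.uIcc_comm, Set.uIcc_of_le hyx.le] at hpq
    have hd := F_diff hbd hc hy hx hyx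
    rw [show ((if c < y then lowerDarboux f c y else if y = c then 0 else -(lowerDarboux f y c)) -
        (if c < x then lowerDarboux f c x else if x = c then 0 else -(lowerDarboux f x c))) / (y - x)
        = ((if c < x then lowerDarboux f c x else if x = c then 0 else -(lowerDarboux f x c)) -
        (if c < y then lowerDarboux f c y else if y = c then 0 else -(lowerDarboux f y c))) / (x - y) by
        rw [div_eq_div_iff (by linarith) (by linarith)]; ring]
    rw [hd]
    constructor
    · rw [le_div_iff₀ (by linarith)]
      exact lD_ge hyx.le hpq
    · rw [div_le_iff₀ (by linarith)]
      exact lD_le hyx.le hpq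
end
end

section
/- If f : J → ℝ is bounded on compact subintervals and has a right-hand limit at every point of J, then any two pre-primitives of f on J differ by a constant. -/
open Set Filter Topology

noncomputable section

theorem stmt9 (J : Set ℝ) (hJ : J.OrdConnected) (f : ℝ → ℝ)
    (hbd : BoundedOnCompacts J f)
    (hlim : ∀ x ∈ J, (∃ y ∈ J, x < y) → ∃ L : ℝ, Tendsto f (𝓝[>] x) (𝓝 L))
    (F G : ℝ → ℝ) (hF : PrePrimitive J f F) (hG : PrePrimitive J f G) :
    ∃ C : ℝ, ∀ x ∈ J, F x - G x = C := by
  by_cases hne : J.Nonempty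
  · obtain ⟨a, ha⟩ := hne
    have key : ∀ x ∈ J, ∀ y ∈ J, x < y → F y - G y = F x - G x := by
      intro x hx y hy hxy
      obtain ⟨p, q, hpq⟩ := hbd x hx y hy
      have hxmem : x ∈ Icc x y := ⟨le_refl x, hxy.le⟩
      have hpq' : p ≤ q := (hpq x hxmem).1.trans (hpq x hxmem).2
      have hsub : Icc x y ⊆ J := hJ.out hx hy
      -- general difference quotient estimate
      have quot : ∀ z ∈ Icc x y, ∀ w ∈ Icc x y, z < w → ∀ p' q' : ℝ,
          (∀ t ∈ Icc z w, p' ≤ f t ∧ f t ≤ q') →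
          |(F w - G w) - (F z - G z)| ≤ (q' - p') * (w - z) := by
        intro z hz w hw hzw p' q' hb
        have hzJ := hsub hz; have hwJ := hsub hw
        have hu : Set.uIcc z w = Icc z w := Set.uIcc_of_le hzw.le
        have hF' := hF z hzJ w hwJ hzw.ne p' q' (by rw [hu]; exact hb)
        have hG' := hG z hzJ w hwJ hzw.ne p' q' (by rw [hu]; exact hb)
        have hwz : 0 < w - z := by linarith
        have hsplit : ((F w - G w) - (F z - G z)) / (w - z)
            = (F w - F z) / (w - z) - (G w - G z) / (w - z) := by ring
        have habs : |((F w - G w) - (F z - G z)) / (w - z)| ≤ q' - p' := by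
          rw [hsplit, abs_le]
          constructor <;> [linarith [hF'.1, hG'.2]; linarith [hF'.2, hG'.1]]
        rw [abs_div, abs_of_pos hwz, div_le_iff₀ hwz] at habs
        exact habs
      have lip : ∀ z ∈ Icc x y, ∀ w ∈ Icc x y, z < w →
          |(F w - G w) - (F z - G z)| ≤ (q - p) * (w - z) := by
        intro z hz w hw hzw
        exact quot z hz w hw hzw p q (fun t ht =>
          hpq t ⟨hz.1.trans ht.1, ht.2.trans hw.2⟩)
      have main : ∀ ε > 0, |(F y - G y) - (F x - G x)| ≤ ε * (y - x) := by
        intro ε hε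
        set S := {z | z ∈ Icc x y ∧ |(F z - G z) - (F x - G x)| ≤ ε * (z - x)} with hS
        have hxS : x ∈ S := ⟨hxmem, by simp⟩
        have hSne : S.Nonempty := ⟨x, hxS⟩
        have hbdd : BddAbove S := ⟨y, fun z hz => hz.1.2⟩
        set s := sSup S with hs
        have hxs : x ≤ s := le_csSup hbdd hxS
        have hsy : s ≤ y := csSup_le hSne (fun z hz => hz.1.2)
        have hsmem : s ∈ Icc x y := ⟨hxs, hsy⟩
        have hQ : (0:ℝ) < q - p + 1 := by linarith
        -- s ∈ S
        have hsS : |(F s - G s) - (F x - G x)| ≤ ε * (s - x) := by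
          refine le_of_forall_pos_le_add ?_
          intro η hη
          have hδpos : 0 < η / (q - p + 1) := div_pos hη hQ
          obtain ⟨z, hzS, hzlt⟩ := exists_lt_of_lt_csSup hSne
            (show s - η / (q - p + 1) < s by linarith)
          have hzs : z ≤ s := le_csSup hbdd hzS
          have hqpδ : (q - p) * (s - z) ≤ η := by
            have h1 : s - z ≤ η / (q - p + 1) := by linarith
            have h2 : (q - p) * (s - z) ≤ (q - p) * (η / (q - p + 1)) :=
              mul_le_mul_of_nonneg_left h1 (by linarith)
            have hd : (q - p + 1) * (η / (q - p + 1)) = η := by field_simp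
            have h3 : (q - p) * (η / (q - p + 1)) ≤ η := by
              linarith [div_pos hη hQ]
            linarith
          rcases eq_or_lt_of_le hzs with heq | hzs'
          · rw [heq] at hzS; linarith [hzS.2]
          · have hls := lip z hzS.1 s hsmem hzs'
            have tri := abs_sub_le (F s - G s) (F z - G z) (F x - G x)
            have : ε * (z - x) ≤ ε * (s - x) :=
              mul_le_mul_of_nonneg_left (by linarith) hε.le
            linarith [hzS.2]
        rcases eq_or_lt_of_le hsy with heq | hsy'
        · rw [heq] at hsS; exact hsS
        · exfalso
          have hsJ : s ∈ J := hsub hsmem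
          obtain ⟨L, hL⟩ := hlim s hsJ ⟨y, hy, hsy'⟩
          rw [Metric.tendsto_nhdsWithin_nhds] at hL
          obtain ⟨δ, hδpos, hball⟩ := hL (ε/4) (by linarith)
          set w := min (s + δ/2) y with hw
          have hsw : s < w := lt_min (by linarith) hsy'
          have hwy : w ≤ y := min_le_right _ _
          have hwmem : w ∈ Icc x y := ⟨hxs.trans hsw.le, hwy⟩
          have hfb : ∀ t, s < t → t ≤ w → L - ε/4 ≤ f t ∧ f t ≤ L + ε/4 := by
            intro t hst htw
            have hdist : dist t s < δ := by
              rw [Real.dist_eq, abs_of_pos (by linarith)]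
              have : w ≤ s + δ/2 := min_le_left _ _
              linarith
            have := hball (Set.mem_Ioi.mpr hst) hdist
            rw [Real.dist_eq, abs_lt] at this
            constructor <;> linarith [this.1, this.2]
          have hws : |(F w - G w) - (F s - G s)| ≤ (ε/2) * (w - s) := by
            refine le_of_forall_pos_le_add ?_
            intro η hη
            set z' := s + min (η / (q - p + 1)) ((w - s)/2) with hz'
            have hmin1 : (0:ℝ) < min (η / (q - p + 1)) ((w - s)/2) :=
              lt_min (div_pos hη hQ) (by linarith)
            have hsz' : s < z' := by simp only [hz']; linarith
            have hz'w : z' < w := by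
              have : min (η / (q - p + 1)) ((w - s)/2) ≤ (w - s)/2 := min_le_right _ _
              simp only [hz']; linarith
            have hz'mem : z' ∈ Icc x y := ⟨hxs.trans hsz'.le, hz'w.le.trans hwy⟩
            have h1 : |(F z' - G z') - (F s - G s)| ≤ η := by
              have := lip s hsmem z' hz'mem hsz'
              have hle : z' - s ≤ η / (q - p + 1) := by
                have := min_le_left (η / (q - p + 1)) ((w - s)/2)
                simp only [hz']; linarith
              have h2 : (q - p) * (z' - s) ≤ (q - p) * (η / (q - p + 1)) :=
                mul_le_mul_of_nonneg_left hle (by linarith)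
              have hd : (q - p + 1) * (η / (q - p + 1)) = η := by field_simp
              have h3 : (q - p) * (η / (q - p + 1)) ≤ η := by
                linarith [div_pos hη hQ]
              exact this.trans (h2.trans h3)
            have h2 : |(F w - G w) - (F z' - G z')| ≤ (ε/2) * (w - z') := by
              have := quot z' hz'mem w hwmem hz'w (L - ε/4) (L + ε/4)
                (fun t ht => hfb t (hsz'.trans_le ht.1) ht.2)
              have heq : L + ε/4 - (L - ε/4) = ε/2 := by ring
              rwa [heq] at this
            have h4 : (ε/2) * (w - z') ≤ (ε/2) * (w - s) :=
              mul_le_mul_of_nonneg_left (by linarith) (by linarith)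
            have tri := abs_sub_le (F w - G w) (F z' - G z') (F s - G s)
            linarith
          have hwS : w ∈ S := by
            refine ⟨hwmem, ?_⟩
            have tri := abs_sub_le (F w - G w) (F s - G s) (F x - G x)
            nlinarith [hws, hsS]
          have : w ≤ s := le_csSup hbdd hwS
          linarith
      have hyx : 0 < y - x := by linarith
      have habs : |(F y - G y) - (F x - G x)| ≤ 0 := by
        by_contra h
        push_neg at h
        have h1 := main (|(F y - G y) - (F x - G x)| / (2 * (y - x)))
          (by positivity)
        have h2 : |(F y - G y) - (F x - G x)| / (2 * (y - x)) * (y - x)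
            = |(F y - G y) - (F x - G x)| / 2 := by
          field_simp
        linarith
      have := abs_nonpos_iff.mp habs
      linarith
    refine ⟨F a - G a, ?_⟩
    intro x hx
    rcases lt_trichotomy x a with h | h | h
    · exact (key x hx a ha h).symm
    · rw [h]
    · exact key a ha x hx h
  · exact ⟨0, fun x hx => absurd ⟨x, hx⟩ hne⟩
end
end

section
/- Let f : J → ℝ be bounded on compact subintervals of an interval J. If any two pre-primitives of f on J differ by a constant, then f is Riemann (Darboux) integrable on every compact subinterval of J. -/
/-!
Fix `a ∈ J`. The signed lower Darboux integral `t ↦ ∫_a^t f` is additive over adjacent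
intervals and, on `[x, y]`, lies between `p (y - x)` and `q (y - x)` for any bounds `p ≤ f ≤ q`
there; so it is a pre-primitive of `f`. The same holds for the signed upper integral, obtained
as the negative of the lower integral of `-f`. If pre-primitives differ by constants, these two
have the same increment between `a` and `b`, which is the equality of the lower and upper
Darboux integrals over `[a, b]`.
-/
open Set Filter Topology

noncomputable section

open scoped Pointwise

/-- Lower Darboux sums, described by peeling off the first subinterval of the partition. -/
inductive IsLowerSum (f : ℝ → ℝ) : ℝ → ℝ → ℝ → Prop
  | nil (a : ℝ) : IsLowerSum f a a 0
  | cons {a a' b p s : ℝ} : a ≤ a' → (∀ t ∈ Icc a a', p ≤ f t) → IsLowerSum f a' b s →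
      IsLowerSum f a b (p * (a' - a) + s)

namespace IsLowerSum

variable {f : ℝ → ℝ}

theorem le {a b s : ℝ} (h : IsLowerSum f a b s) : a ≤ b := by
  induction h with
  | nil => exact le_rfl
  | cons haa' _ _ ih => exact haa'.trans ih

theorem const {a b p : ℝ} (hab : a ≤ b) (hp : ∀ t ∈ Icc a b, p ≤ f t) :
    IsLowerSum f a b (p * (b - a)) := by
  simpa using cons hab hp (nil b)

theorem le_mul_sub {a b q s : ℝ} (h : IsLowerSum f a b s) (hq : ∀ t ∈ Icc a b, f t ≤ q) :
    s ≤ q * (b - a) := by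
  induction h with
  | nil => simp
  | @cons a a' b p s haa' hp hs ih =>
    have hpq : p ≤ q := (hp a ⟨le_rfl, haa'⟩).trans (hq a ⟨le_rfl, haa'.trans hs.le⟩)
    have hs_le := ih fun t ht => hq t ⟨haa'.trans ht.1, ht.2⟩
    linarith [mul_le_mul_of_nonneg_right hpq (sub_nonneg.2 haa')]

theorem append {a b c s t : ℝ} (hs : IsLowerSum f a b s) (ht : IsLowerSum f b c t) :
    IsLowerSum f a c (s + t) := by
  induction hs with
  | nil => simpa using ht
  | cons haa' hp _ ih => simpa only [add_assoc] using cons haa' hp (ih ht)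

theorem exists_split {a b c s : ℝ} (hs : IsLowerSum f a c s) (hab : a ≤ b) (hbc : b ≤ c) :
    ∃ u v, IsLowerSum f a b u ∧ IsLowerSum f b c v ∧ s = u + v := by
  induction hs generalizing b with
  | nil a =>
    obtain rfl := le_antisymm hab hbc
    exact ⟨0, 0, nil a, nil a, by simp⟩
  | @cons a a' c p s haa' hp hs ih =>
    by_cases hba' : b ≤ a'
    · refine ⟨p * (b - a), p * (a' - b) + s, const hab fun t ht => hp t ⟨ht.1, ht.2.trans hba'⟩,
        cons hba' (fun t ht => hp t ⟨hab.trans ht.1, ht.2⟩) hs, by ring⟩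
    · obtain ⟨u, v, hu, hv, rfl⟩ := ih (le_of_not_ge hba') hbc
      exact ⟨p * (a' - a) + u, v, cons haa' hp hu, hv, by ring⟩

theorem of_partition {x p : ℕ → ℝ} {n : ℕ} (hx : ∀ i < n, x i ≤ x (i + 1))
    (hp : ∀ i < n, ∀ t ∈ Icc (x i) (x (i + 1)), p i ≤ f t) :
    IsLowerSum f (x 0) (x n) (∑ i ∈ Finset.range n, p i * (x (i + 1) - x i)) := by
  induction n generalizing x p with
  | zero => exact nil (x 0)
  | succ n ih =>
    rw [Finset.sum_range_succ', add_comm (Finset.sum _ _)]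
    exact cons (hx 0 n.succ_pos) (hp 0 n.succ_pos)
      (ih (x := fun i => x (i + 1)) (fun i hi => hx (i + 1) (by omega))
        (fun i hi => hp (i + 1) (by omega)))

end IsLowerSum

section Darboux

variable {f : ℝ → ℝ} {a b c p q : ℝ}

theorem mem_lowerSums_iff {s : ℝ} : s ∈ lowerSums f a b ↔ IsLowerSum f a b s := by
  constructor
  · rintro ⟨n, x, p, rfl, rfl, hx, hp, rfl⟩
    exact IsLowerSum.of_partition hx hp
  · intro h
    induction h with
    | nil a => exact ⟨0, fun _ => a, 0, rfl, rfl, by simp, by simp, by simp⟩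
    | @cons a a' b p s haa' hp _ ih =>
      obtain ⟨n, x, r, hx0, rfl, hx, hr, rfl⟩ := ih
      refine ⟨n + 1, fun | 0 => a | i + 1 => x i, fun | 0 => p | i + 1 => r i,
        rfl, rfl, ?_, ?_, ?_⟩
      · rintro (_ | i) hi
        · simpa [hx0] using haa'
        · exact hx i (by omega)
      · rintro (_ | i) hi
        · simpa [hx0] using hp
        · exact hr i (by omega)
      · simp [Finset.sum_range_succ', hx0, add_comm]

theorem lowerSums_add_lowerSums (hab : a ≤ b) (hbc : b ≤ c) :
    lowerSums f a b + lowerSums f b c = lowerSums f a c := by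
  ext s
  simp only [Set.mem_add, mem_lowerSums_iff]
  constructor
  · rintro ⟨u, hu, v, hv, rfl⟩
    exact hu.append hv
  · intro hs
    obtain ⟨u, v, hu, hv, rfl⟩ := hs.exists_split hab hbc
    exact ⟨u, hu, v, hv, rfl⟩

theorem const_mul_sub_mem_lowerSums (hab : a ≤ b) (hp : ∀ t ∈ Icc a b, p ≤ f t) :
    p * (b - a) ∈ lowerSums f a b :=
  mem_lowerSums_iff.2 (IsLowerSum.const hab hp)

theorem mem_upperBounds_lowerSums (hq : ∀ t ∈ Icc a b, f t ≤ q) :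
    q * (b - a) ∈ upperBounds (lowerSums f a b) :=
  fun _ hs => (mem_lowerSums_iff.1 hs).le_mul_sub hq

theorem lowerDarboux_mem_Icc (hab : a ≤ b) (hpq : ∀ t ∈ Icc a b, p ≤ f t ∧ f t ≤ q) :
    lowerDarboux f a b ∈ Icc (p * (b - a)) (q * (b - a)) :=
  ⟨le_csSup ⟨_, mem_upperBounds_lowerSums fun t ht => (hpq t ht).2⟩
      (const_mul_sub_mem_lowerSums hab fun t ht => (hpq t ht).1),
    csSup_le ⟨_, const_mul_sub_mem_lowerSums hab fun t ht => (hpq t ht).1⟩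
      (mem_upperBounds_lowerSums fun t ht => (hpq t ht).2)⟩

theorem lowerDarboux_add (hab : a ≤ b) (hbc : b ≤ c)
    (hpq : ∀ t ∈ Icc a c, p ≤ f t ∧ f t ≤ q) :
    lowerDarboux f a b + lowerDarboux f b c = lowerDarboux f a c := by
  have hsums : ∀ {x y}, a ≤ x → y ≤ c → x ≤ y →
      (lowerSums f x y).Nonempty ∧ BddAbove (lowerSums f x y) := fun hax hyc hxy =>
    ⟨⟨_, const_mul_sub_mem_lowerSums hxy fun t ht => (hpq t ⟨hax.trans ht.1, ht.2.trans hyc⟩).1⟩,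
      ⟨_, mem_upperBounds_lowerSums fun t ht => (hpq t ⟨hax.trans ht.1, ht.2.trans hyc⟩).2⟩⟩
  obtain ⟨hne₁, hbdd₁⟩ := hsums le_rfl hbc hab
  obtain ⟨hne₂, hbdd₂⟩ := hsums hab le_rfl hbc
  rw [lowerDarboux, lowerDarboux, lowerDarboux, ← lowerSums_add_lowerSums hab hbc,
    csSup_add hne₁ hbdd₁ hne₂ hbdd₂]

theorem upperSums_eq_neg_lowerSums_neg (f : ℝ → ℝ) (a b : ℝ) :
    upperSums f a b = -lowerSums (fun t => -f t) a b := by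
  ext s
  rw [Set.mem_neg]
  constructor
  · rintro ⟨n, x, q, h0, hn, hx, hq, rfl⟩
    refine ⟨n, x, fun i => -q i, h0, hn, hx, fun i hi t ht => neg_le_neg (hq i hi t ht), ?_⟩
    simp [Finset.sum_neg_distrib]
  · rintro ⟨n, x, p, h0, hn, hx, hp, hs⟩
    refine ⟨n, x, fun i => -p i, h0, hn, hx, fun i hi t ht => le_neg_of_le_neg (hp i hi t ht), ?_⟩
    simp [← hs]

theorem upperDarboux_eq_neg_lowerDarboux_neg (f : ℝ → ℝ) (a b : ℝ) :
    upperDarboux f a b = -lowerDarboux (fun t => -f t) a b := by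
  rw [upperDarboux, lowerDarboux, upperSums_eq_neg_lowerSums_neg, Real.sInf_def, neg_neg]

def lowerPrimitive (f : ℝ → ℝ) (a t : ℝ) : ℝ :=
  if a ≤ t then lowerDarboux f a t else -lowerDarboux f t a

section PrePrimitive

variable {J : Set ℝ} {F : ℝ → ℝ}

theorem BoundedOnCompacts.neg (hbd : BoundedOnCompacts J f) :
    BoundedOnCompacts J fun t => -f t := by
  intro a ha b hb
  obtain ⟨p, q, hpq⟩ := hbd a ha b hb
  exact ⟨-q, -p, fun t ht => ⟨neg_le_neg (hpq t ht).2, neg_le_neg (hpq t ht).1⟩⟩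

theorem lowerPrimitive_sub {x y : ℝ} (hbd : BoundedOnCompacts J f) (ha : a ∈ J) (hx : x ∈ J)
    (hy : y ∈ J) (hxy : x ≤ y) :
    lowerPrimitive f a y - lowerPrimitive f a x = lowerDarboux f x y := by
  unfold lowerPrimitive
  split_ifs with hay hax hax
  · obtain ⟨p, q, hpq⟩ := hbd a ha y hy
    rw [← lowerDarboux_add hax hxy hpq]
    ring
  · obtain ⟨p, q, hpq⟩ := hbd x hx y hy
    rw [← lowerDarboux_add (le_of_not_ge hax) hay hpq]
    ring
  · exact absurd (hax.trans hxy) hay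
  · obtain ⟨p, q, hpq⟩ := hbd x hx a ha
    rw [← lowerDarboux_add hxy (le_of_not_ge hay) hpq]
    ring

theorem prePrimitive_of_forall_lt
    (hF : ∀ x ∈ J, ∀ y ∈ J, x < y → ∀ p q : ℝ, (∀ t ∈ Icc x y, p ≤ f t ∧ f t ≤ q) →
      F y - F x ∈ Icc (p * (y - x)) (q * (y - x))) :
    PrePrimitive J f F := by
  intro x hx y hy hne p q hpq
  rcases hne.lt_or_gt with hxy | hyx
  · rw [uIcc_of_le hxy.le] at hpq
    obtain ⟨h₁, h₂⟩ := hF x hx y hy hxy p q hpq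
    exact ⟨(le_div_iff₀ (sub_pos.2 hxy)).2 h₁, (div_le_iff₀ (sub_pos.2 hxy)).2 h₂⟩
  · rw [uIcc_of_ge hyx.le] at hpq
    obtain ⟨h₁, h₂⟩ := hF y hy x hx hyx p q hpq
    rw [← neg_div_neg_eq, neg_sub, neg_sub]
    exact ⟨(le_div_iff₀ (sub_pos.2 hyx)).2 h₁, (div_le_iff₀ (sub_pos.2 hyx)).2 h₂⟩

theorem prePrimitive_lowerPrimitive (hbd : BoundedOnCompacts J f) (ha : a ∈ J) :
    PrePrimitive J f (lowerPrimitive f a) :=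
  prePrimitive_of_forall_lt fun x hx y hy hxy _ _ hpq => by
    rw [lowerPrimitive_sub hbd ha hx hy hxy.le]
    exact lowerDarboux_mem_Icc hxy.le hpq

theorem PrePrimitive.neg (hF : PrePrimitive J (fun t => -f t) F) :
    PrePrimitive J f fun t => -F t := by
  intro x hx y hy hne p q hpq
  obtain ⟨h₁, h₂⟩ := hF x hx y hy hne (-q) (-p)
    fun t ht => ⟨neg_le_neg (hpq t ht).2, neg_le_neg (hpq t ht).1⟩
  rw [← neg_sub', neg_div]
  exact ⟨le_neg_of_le_neg h₂, neg_le_of_neg_le h₁⟩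

end PrePrimitive

end Darboux

theorem stmt10_general (J : Set ℝ) (f : ℝ → ℝ)
    (hbd : BoundedOnCompacts J f)
    (h : ∀ F G : ℝ → ℝ, PrePrimitive J f F → PrePrimitive J f G →
      ∃ C : ℝ, ∀ x ∈ J, F x - G x = C) :
    DarbouxIntegrableOnCompacts J f := by
  intro a ha b hb hab
  obtain ⟨C, hC⟩ := h _ _ (prePrimitive_lowerPrimitive hbd ha)
    (prePrimitive_lowerPrimitive hbd.neg ha).neg
  have hlower := lowerPrimitive_sub hbd ha ha hb hab.le
  have hupper := lowerPrimitive_sub hbd.neg ha ha hb hab.le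
  rw [upperDarboux_eq_neg_lowerDarboux_neg]
  linarith [hC a ha, hC b hb]

theorem stmt10 (J : Set ℝ) (hJ : J.OrdConnected) (f : ℝ → ℝ)
    (hbd : BoundedOnCompacts J f)
    (h : ∀ F G : ℝ → ℝ, PrePrimitive J f F → PrePrimitive J f G →
      ∃ C : ℝ, ∀ x ∈ J, F x - G x = C) :
    DarbouxIntegrableOnCompacts J f :=
  stmt10_general J f hbd h
end
end

section
/- Let f : J → ℝ be bounded on compact subintervals and Riemann (Darboux) integrable on every compact subinterval of J. Then for every pre-primitive F of f on J and all a, b ∈ J with a < b, the lower Darboux integral of f over [a,b] ≤ F(b) - F(a) ≤ the upper Darboux integral of f over [a,b]; consequently ∫ₐᵇ f = F(b) - F(a). -/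
open Set Filter Topology

noncomputable section

lemma part_mono {x : ℕ → ℝ} {n : ℕ} (h : ∀ i < n, x i ≤ x (i + 1)) :
    ∀ i j, i ≤ j → j ≤ n → x i ≤ x j := by
  intro i j hij hjn
  induction j with
  | zero => simp [Nat.le_zero.mp hij]
  | succ j ih =>
    rcases Nat.lt_or_ge i (j + 1) with h1 | h1
    · exact le_trans (ih (Nat.lt_succ_iff.mp h1) (Nat.le_of_succ_le hjn))
        (h j (Nat.lt_of_succ_le hjn))
    · have : i = j + 1 := le_antisymm hij h1
      simp [this]

theorem stmt11 (J : Set ℝ) (hJ : J.OrdConnected) (f F : ℝ → ℝ)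
    (hbd : BoundedOnCompacts J f)
    (hint : DarbouxIntegrableOnCompacts J f)
    (hF : PrePrimitive J f F) :
    ∀ a ∈ J, ∀ b ∈ J, a < b →
      lowerDarboux f a b ≤ F b - F a ∧ F b - F a ≤ upperDarboux f a b ∧
      lowerDarboux f a b = F b - F a := by
  intro a ha b hb hab
  have hsub : Set.Icc a b ⊆ J := hJ.out ha hb
  obtain ⟨p₀, q₀, hpq⟩ := hbd a ha b hb
  -- every lower sum is ≤ F b - F a
  have hlow : ∀ s ∈ lowerSums f a b, s ≤ F b - F a := by
    rintro s ⟨n, x, p, hx0, hxn, hmono, hp, rfl⟩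
    have hmem : ∀ i ≤ n, x i ∈ Set.Icc a b := by
      intro i hi
      constructor
      · rw [← hx0]; exact part_mono hmono 0 i (Nat.zero_le _) hi
      · rw [← hxn]; exact part_mono hmono i n hi le_rfl
    have key : ∀ i < n, p i * (x (i + 1) - x i) ≤ F (x (i + 1)) - F (x i) := by
      intro i hi
      rcases eq_or_lt_of_le (hmono i hi) with heq | hlt
      · rw [← heq]; simp
      · have hi1 : x i ∈ J := hsub (hmem i hi.le)
        have hi2 : x (i + 1) ∈ J := hsub (hmem (i + 1) hi)
        have hsubI : Set.Icc (x i) (x (i + 1)) ⊆ Set.Icc a b := by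
          apply Set.Icc_subset_Icc (hmem i hi.le).1 (hmem (i + 1) hi).2
        have hbds : ∀ t ∈ Set.uIcc (x i) (x (i + 1)), p i ≤ f t ∧ f t ≤ q₀ := by
          intro t ht
          rw [Set.uIcc_of_le hlt.le] at ht
          exact ⟨hp i hi t ht, (hpq t (hsubI ht)).2⟩
        have := (hF (x i) hi1 (x (i + 1)) hi2 hlt.ne (p i) q₀ hbds).1
        have hd : (0:ℝ) < x (i + 1) - x i := by linarith
        rw [le_div_iff₀ hd] at this
        linarith
    calc ∑ i ∈ Finset.range n, p i * (x (i + 1) - x i)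
        ≤ ∑ i ∈ Finset.range n, (F (x (i + 1)) - F (x i)) := by
          apply Finset.sum_le_sum
          intro i hi
          exact key i (Finset.mem_range.mp hi)
      _ = F (x n) - F (x 0) := Finset.sum_range_sub (fun i => F (x i)) n
      _ = F b - F a := by rw [hx0, hxn]
  have hupp : ∀ s ∈ upperSums f a b, F b - F a ≤ s := by
    rintro s ⟨n, x, q, hx0, hxn, hmono, hq, rfl⟩
    have hmem : ∀ i ≤ n, x i ∈ Set.Icc a b := by
      intro i hi
      constructor
      · rw [← hx0]; exact part_mono hmono 0 i (Nat.zero_le _) hi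
      · rw [← hxn]; exact part_mono hmono i n hi le_rfl
    have key : ∀ i < n, F (x (i + 1)) - F (x i) ≤ q i * (x (i + 1) - x i) := by
      intro i hi
      rcases eq_or_lt_of_le (hmono i hi) with heq | hlt
      · rw [← heq]; simp
      · have hi1 : x i ∈ J := hsub (hmem i hi.le)
        have hi2 : x (i + 1) ∈ J := hsub (hmem (i + 1) hi)
        have hsubI : Set.Icc (x i) (x (i + 1)) ⊆ Set.Icc a b := by
          apply Set.Icc_subset_Icc (hmem i hi.le).1 (hmem (i + 1) hi).2
        have hbds : ∀ t ∈ Set.uIcc (x i) (x (i + 1)), p₀ ≤ f t ∧ f t ≤ q i := by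
          intro t ht
          rw [Set.uIcc_of_le hlt.le] at ht
          exact ⟨(hpq t (hsubI ht)).1, hq i hi t ht⟩
        have := (hF (x i) hi1 (x (i + 1)) hi2 hlt.ne p₀ (q i) hbds).2
        have hd : (0:ℝ) < x (i + 1) - x i := by linarith
        rw [div_le_iff₀ hd] at this
        linarith
    calc F b - F a = F (x n) - F (x 0) := by rw [hx0, hxn]
      _ = ∑ i ∈ Finset.range n, (F (x (i + 1)) - F (x i)) :=
          (Finset.sum_range_sub (fun i => F (x i)) n).symm
      _ ≤ ∑ i ∈ Finset.range n, q i * (x (i + 1) - x i) := by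
          apply Finset.sum_le_sum
          intro i hi
          exact key i (Finset.mem_range.mp hi)
  have hlne : (lowerSums f a b).Nonempty := by
    refine ⟨p₀ * (b - a), 1, fun i => if i = 0 then a else b, fun _ => p₀, by simp, by simp,
      ?_, ?_, by simp⟩
    · intro i hi
      interval_cases i
      simpa using hab.le
    · intro i hi t ht
      interval_cases i
      simp only [if_pos rfl, if_neg one_ne_zero] at ht
      exact (hpq t ht).1
  have hune : (upperSums f a b).Nonempty := by
    refine ⟨q₀ * (b - a), 1, fun i => if i = 0 then a else b, fun _ => q₀, by simp, by simp,
      ?_, ?_, by simp⟩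
    · intro i hi
      interval_cases i
      simpa using hab.le
    · intro i hi t ht
      interval_cases i
      simp only [if_pos rfl, if_neg one_ne_zero] at ht
      exact (hpq t ht).2
  have h1 : lowerDarboux f a b ≤ F b - F a := csSup_le hlne hlow
  have h2 : F b - F a ≤ upperDarboux f a b := le_csInf hune hupp
  refine ⟨h1, h2, le_antisymm h1 ?_⟩
  rw [hint a ha b hb hab]
  exact h2
end
end

section
/- Let f : J → ℝ be bounded on compact subintervals. If f is Riemann (Darboux) integrable on every compact subinterval of J, then any two pre-primitives of f on J differ by a constant. -/
open Set Filter Topology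

noncomputable section

private lemma chain_mono {n : ℕ} {x : ℕ → ℝ} (hx : ∀ i < n, x i ≤ x (i + 1)) :
    ∀ j ≤ n, ∀ i ≤ j, x i ≤ x j := by
  intro j hj
  induction j with
  | zero =>
    intro i hi
    have : i = 0 := by omega
    subst this; exact le_rfl
  | succ j ih =>
    intro i hi
    rcases Nat.lt_or_ge i (j + 1) with h | h
    · exact le_trans (ih (by omega) i (by omega)) (hx j (by omega))
    · have : i = j + 1 := by omega
      subst this; exact le_rfl

private lemma preprim_between (J : Set ℝ) (hJ : J.OrdConnected) (f F : ℝ → ℝ)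
    (hbd : BoundedOnCompacts J f) (hF : PrePrimitive J f F)
    {a b : ℝ} (ha : a ∈ J) (hb : b ∈ J) (hab : a < b) :
    (∀ s ∈ lowerSums f a b, s ≤ F b - F a) ∧ (∀ s ∈ upperSums f a b, F b - F a ≤ s) := by
  obtain ⟨p₀, q₀, hpq⟩ := hbd a ha b hb
  constructor
  · rintro s ⟨n, x, p, hx0, hxn, hmono, hlb, rfl⟩
    have hchain := chain_mono hmono
    have hmem : ∀ i ≤ n, x i ∈ Icc a b := fun i hi =>
      ⟨hx0 ▸ hchain i hi 0 (Nat.zero_le _), hxn ▸ hchain n le_rfl i hi⟩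
    have hJm : ∀ i ≤ n, x i ∈ J := fun i hi => hJ.out ha hb (hmem i hi)
    calc ∑ i ∈ Finset.range n, p i * (x (i + 1) - x i)
        ≤ ∑ i ∈ Finset.range n, (F (x (i + 1)) - F (x i)) := by
          apply Finset.sum_le_sum
          intro i hi
          rw [Finset.mem_range] at hi
          rcases eq_or_lt_of_le (hmono i hi) with heq | hlt
          · rw [← heq]; simp
          · have hne : x i ≠ x (i + 1) := ne_of_lt hlt
            have huicc : Set.uIcc (x i) (x (i + 1)) = Icc (x i) (x (i + 1)) :=
              Set.uIcc_of_le (le_of_lt hlt)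
            have hbnd : ∀ t ∈ Set.uIcc (x i) (x (i + 1)), p i ≤ f t ∧ f t ≤ q₀ := by
              intro t ht
              rw [huicc] at ht
              refine ⟨hlb i hi t ht, ?_⟩
              have : t ∈ Icc a b :=
                ⟨le_trans (hmem i (by omega)).1 ht.1,
                 le_trans ht.2 (hmem (i + 1) (by omega)).2⟩
              exact (hpq t this).2
            have := (hF (x i) (hJm i (by omega)) (x (i + 1)) (hJm (i + 1) (by omega))
              hne (p i) q₀ hbnd).1
            have hΔ : (0 : ℝ) < x (i + 1) - x i := by linarith
            calc p i * (x (i + 1) - x i)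
                ≤ (F (x (i + 1)) - F (x i)) / (x (i + 1) - x i) * (x (i + 1) - x i) := by
                  exact mul_le_mul_of_nonneg_right this (le_of_lt hΔ)
              _ = F (x (i + 1)) - F (x i) := div_mul_cancel₀ _ (ne_of_gt hΔ)
      _ = F (x n) - F (x 0) := Finset.sum_range_sub (fun i => F (x i)) n
      _ = F b - F a := by rw [hx0, hxn]
  · rintro s ⟨n, x, q, hx0, hxn, hmono, hub, rfl⟩
    have hchain := chain_mono hmono
    have hmem : ∀ i ≤ n, x i ∈ Icc a b := fun i hi =>
      ⟨hx0 ▸ hchain i hi 0 (Nat.zero_le _), hxn ▸ hchain n le_rfl i hi⟩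
    have hJm : ∀ i ≤ n, x i ∈ J := fun i hi => hJ.out ha hb (hmem i hi)
    calc F b - F a = F (x n) - F (x 0) := by rw [hx0, hxn]
      _ = ∑ i ∈ Finset.range n, (F (x (i + 1)) - F (x i)) :=
          (Finset.sum_range_sub (fun i => F (x i)) n).symm
      _ ≤ ∑ i ∈ Finset.range n, q i * (x (i + 1) - x i) := by
          apply Finset.sum_le_sum
          intro i hi
          rw [Finset.mem_range] at hi
          rcases eq_or_lt_of_le (hmono i hi) with heq | hlt
          · rw [← heq]; simp
          · have hne : x i ≠ x (i + 1) := ne_of_lt hlt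
            have huicc : Set.uIcc (x i) (x (i + 1)) = Icc (x i) (x (i + 1)) :=
              Set.uIcc_of_le (le_of_lt hlt)
            have hbnd : ∀ t ∈ Set.uIcc (x i) (x (i + 1)), p₀ ≤ f t ∧ f t ≤ q i := by
              intro t ht
              rw [huicc] at ht
              refine ⟨?_, hub i hi t ht⟩
              have : t ∈ Icc a b :=
                ⟨le_trans (hmem i (by omega)).1 ht.1,
                 le_trans ht.2 (hmem (i + 1) (by omega)).2⟩
              exact (hpq t this).1
            have := (hF (x i) (hJm i (by omega)) (x (i + 1)) (hJm (i + 1) (by omega))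
              hne p₀ (q i) hbnd).2
            have hΔ : (0 : ℝ) < x (i + 1) - x i := by linarith
            calc F (x (i + 1)) - F (x i)
                = (F (x (i + 1)) - F (x i)) / (x (i + 1) - x i) * (x (i + 1) - x i) :=
                  (div_mul_cancel₀ _ (ne_of_gt hΔ)).symm
              _ ≤ q i * (x (i + 1) - x i) :=
                  mul_le_mul_of_nonneg_right this (le_of_lt hΔ)

private lemma preprim_eval (J : Set ℝ) (hJ : J.OrdConnected) (f F : ℝ → ℝ)
    (hbd : BoundedOnCompacts J f) (hint : DarbouxIntegrableOnCompacts J f)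
    (hF : PrePrimitive J f F)
    {a b : ℝ} (ha : a ∈ J) (hb : b ∈ J) (hab : a < b) :
    F b - F a = lowerDarboux f a b := by
  obtain ⟨p₀, q₀, hpq⟩ := hbd a ha b hb
  obtain ⟨hlo, hhi⟩ := preprim_between J hJ f F hbd hF ha hb hab
  have hLne : (lowerSums f a b).Nonempty := by
    refine ⟨p₀ * (b - a), 1, fun i => if i = 0 then a else b, fun _ => p₀, by simp, by simp,
      ?_, ?_, by simp⟩
    · intro i hi
      have : i = 0 := by omega
      simp [this, le_of_lt hab]
    · intro i hi t ht
      have : i = 0 := by omega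
      subst this
      norm_num at ht
      exact (hpq t ht).1
  have hUne : (upperSums f a b).Nonempty := by
    refine ⟨q₀ * (b - a), 1, fun i => if i = 0 then a else b, fun _ => q₀, by simp, by simp,
      ?_, ?_, by simp⟩
    · intro i hi
      have : i = 0 := by omega
      simp [this, le_of_lt hab]
    · intro i hi t ht
      have : i = 0 := by omega
      subst this
      norm_num at ht
      exact (hpq t ht).2
  have h1 : lowerDarboux f a b ≤ F b - F a := csSup_le hLne hlo
  have h2 : F b - F a ≤ upperDarboux f a b := le_csInf hUne hhi
  have h3 := hint a ha b hb hab
  linarith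

theorem stmt12 (J : Set ℝ) (hJ : J.OrdConnected) (f : ℝ → ℝ)
    (hbd : BoundedOnCompacts J f)
    (hint : DarbouxIntegrableOnCompacts J f)
    (F G : ℝ → ℝ) (hF : PrePrimitive J f F) (hG : PrePrimitive J f G) :
    ∃ C : ℝ, ∀ x ∈ J, F x - G x = C := by
  by_cases hne : J.Nonempty
  · obtain ⟨a, ha⟩ := hne
    refine ⟨F a - G a, fun x hx => ?_⟩
    rcases lt_trichotomy x a with h | h | h
    · have h1 := preprim_eval J hJ f F hbd hint hF hx ha h
      have h2 := preprim_eval J hJ f G hbd hint hG hx ha h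
      linarith
    · rw [h]
    · have h1 := preprim_eval J hJ f F hbd hint hF ha hx h
      have h2 := preprim_eval J hJ f G hbd hint hG ha hx h
      linarith
  · exact ⟨0, fun x hx => absurd ⟨x, hx⟩ hne⟩
end
end

section
/- Every continuous function f : J → ℝ on an interval J admits a primitive on J: there exists F : J → ℝ differentiable on J with F' = f, obtained as a pre-primitive of f (without using uniform continuity on compacts). -/
open Set Filter Topology

noncomputable section

open intervalIntegral in
private lemma integral_bound_aux (f : ℝ → ℝ) (a b p q : ℝ) (hab : a ≤ b)
    (hi : IntervalIntegrable f MeasureTheory.volume a b)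
    (hb : ∀ t ∈ Set.Icc a b, p ≤ f t ∧ f t ≤ q) :
    p * (b - a) ≤ (∫ t in a..b, f t) ∧ (∫ t in a..b, f t) ≤ q * (b - a) := by
  constructor
  · calc p * (b - a) = ∫ _ in a..b, p := by simp [mul_comm]
    _ ≤ ∫ t in a..b, f t :=
      integral_mono_on hab intervalIntegrable_const hi (fun t ht => (hb t ht).1)
  · calc (∫ t in a..b, f t) ≤ ∫ _ in a..b, q :=
      integral_mono_on hab hi intervalIntegrable_const (fun t ht => (hb t ht).2)
    _ = q * (b - a) := by simp [mul_comm]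

theorem stmt16 (J : Set ℝ) (hJ : J.OrdConnected) (f : ℝ → ℝ)
    (hf : ContinuousOn f J) :
    ∃ F : ℝ → ℝ, PrePrimitive J f F ∧ ∀ x ∈ J, HasDerivWithinAt F (f x) J x := by
  rcases J.eq_empty_or_nonempty with hE | ⟨c, hc⟩
  · exact ⟨0, by simp [PrePrimitive, hE], by simp [hE]⟩
  set F : ℝ → ℝ := fun x => ∫ t in c..x, f t with hFdef
  have hint : ∀ x ∈ J, ∀ y ∈ J, IntervalIntegrable f MeasureTheory.volume x y :=
    fun x hx y hy => (hf.mono (hJ.uIcc_subset hx hy)).intervalIntegrable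
  have hsub : ∀ x ∈ J, ∀ y ∈ J, F y - F x = ∫ t in x..y, f t := fun x hx y hy =>
    intervalIntegral.integral_interval_sub_left (hint c hc y hy) (hint c hc x hx)
  have key : PrePrimitive J f F := by
    intro x hx y hy hxy p q hpq
    rcases hxy.lt_or_gt with h | h
    · have hq := integral_bound_aux f x y p q h.le (hint x hx y hy)
        (fun t ht => hpq t (by rwa [Set.uIcc_of_le h.le]))
      rw [hsub x hx y hy]
      have hyx : (0:ℝ) < y - x := sub_pos.2 h
      exact ⟨(le_div_iff₀ hyx).2 hq.1, (div_le_iff₀ hyx).2 hq.2⟩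
    · have hq := integral_bound_aux f y x p q h.le (hint y hy x hx)
        (fun t ht => hpq t (by rwa [Set.uIcc_of_ge h.le]))
      have hxy' : (0:ℝ) < x - y := sub_pos.2 h
      have heq : (F y - F x) / (y - x) = (∫ t in y..x, f t) / (x - y) := by
        rw [hsub x hx y hy, intervalIntegral.integral_symm, neg_div, ← div_neg, neg_sub]
      rw [heq]
      exact ⟨(le_div_iff₀ hxy').2 hq.1, (div_le_iff₀ hxy').2 hq.2⟩
  refine ⟨F, key, fun x hx => ?_⟩
  rw [hasDerivWithinAt_iff_tendsto_slope, Metric.tendsto_nhdsWithin_nhds]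
  intro ε hε
  obtain ⟨δ, hδ, hδ'⟩ := Metric.continuousWithinAt_iff.1 (hf x hx) (ε/2) (by positivity)
  refine ⟨δ, hδ, fun {y} hy hyd => ?_⟩
  have hyJ : y ∈ J := hy.1
  have hxy : x ≠ y := fun h => hy.2 (by simp [h])
  have hbnd : ∀ t ∈ Set.uIcc x y, f x - ε/2 ≤ f t ∧ f t ≤ f x + ε/2 := by
    intro t ht
    have htJ : t ∈ J := hJ.uIcc_subset hx hyJ ht
    have hdist : dist t x < δ := lt_of_le_of_lt
      (Real.dist_le_of_mem_uIcc ht left_mem_uIcc) (by rwa [dist_comm] at hyd)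
    have h2 := hδ' htJ hdist
    rw [Real.dist_eq, abs_lt] at h2
    constructor <;> linarith [h2.1, h2.2]
  obtain ⟨h1, h2⟩ := key x hx y hyJ hxy _ _ hbnd
  have hslope : slope F x y = (F y - F x) / (y - x) := by
    rw [slope_def_field]
  rw [hslope, Real.dist_eq, abs_lt]
  exact ⟨by linarith, by linarith⟩
end
end
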